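/- arXiv:1508.02990 — 5 statements merged into one kernel-verified Lean document; each statement's English description precedes it below -/
import Mathlib

section
/- Piola identity: if y : ℝ³ → ℝ³ is twice continuously differentiable, then every row of the cofactor matrix of its Jacobian is divergence-free; that is, for every x ∈ ℝ³ and every index i ∈ {1,2,3}, ∑_{j=1}^{3} ∂_j ( (cof ∇y(x))_{ij} ) = 0. -/
open MeasureTheory Matrix

/-- Cofactor matrix: the transpose of the adjugate, so that `A * (cof A)ᵀ = det A • 1`. -/
noncomputable def cof (A : Matrix (Fin 3) (Fin 3) ℝ) : Matrix (Fin 3) (Fin 3) ℝ :=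
  (Matrix.adjugate A)ᵀ

/-- Jacobian matrix of `y` at `x`: entries `(∇y(x))_{kp} = ∂y_k/∂x_p(x)`. -/
noncomputable def jac (y : (Fin 3 → ℝ) → Fin 3 → ℝ) (x : Fin 3 → ℝ) :
    Matrix (Fin 3) (Fin 3) ℝ :=
  Matrix.of fun k p => fderiv ℝ y x (Pi.single p 1) k

/-- Partial derivative of a scalar function in the `j`-th coordinate direction. -/
noncomputable def pd (j : Fin 3) (f : (Fin 3 → ℝ) → ℝ) (x : Fin 3 → ℝ) : ℝ :=
  fderiv ℝ f x (Pi.single j 1)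

/-! Writing the cofactors cyclically, `(cof A)ᵢⱼ = A_{i+1,j+1} A_{i+2,j+2} - A_{i+1,j+2} A_{i+2,j+1}`,
the Leibniz rule turns the row divergence into twelve terms, each a second derivative `∂ⱼ∂ₚ y_k`
times a first derivative; they cancel in pairs by the symmetry `∂ⱼ∂ₚ y = ∂ₚ∂ⱼ y` of a `C²` map. -/

lemma cof_apply (A : Matrix (Fin 3) (Fin 3) ℝ) (i j : Fin 3) :
    cof A i j = A (i + 1) (j + 1) * A (i + 2) (j + 2) - A (i + 1) (j + 2) * A (i + 2) (j + 1) := by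
  fin_cases i <;> fin_cases j <;> simp [cof, adjugate_fin_three] <;> ring

section pd

variable {f g : (Fin 3 → ℝ) → ℝ} {x : Fin 3 → ℝ} (j : Fin 3)

lemma pd_mul (hf : DifferentiableAt ℝ f x) (hg : DifferentiableAt ℝ g x) :
    pd j (fun z => f z * g z) x = pd j f x * g x + f x * pd j g x := by
  simp only [pd, fderiv_fun_mul hf hg, _root_.add_apply, _root_.smul_apply, smul_eq_mul]
  ring

lemma pd_sub (hf : DifferentiableAt ℝ f x) (hg : DifferentiableAt ℝ g x) :
    pd j (fun z => f z - g z) x = pd j f x - pd j g x := by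
  simp only [pd, fderiv_fun_sub hf hg, _root_.sub_apply]

end pd

section jac

variable {y : (Fin 3 → ℝ) → Fin 3 → ℝ} {x : Fin 3 → ℝ}

lemma hasFDerivAt_jac_apply (hy : ContDiff ℝ 2 y) (k p : Fin 3) :
    HasFDerivAt (fun z => jac y z k p)
      ((ContinuousLinearMap.proj k).comp
        ((fderiv ℝ (fderiv ℝ y) x).flip (Pi.single p 1))) x := by
  have hF : Differentiable ℝ (fderiv ℝ y) :=
    (hy.fderiv_right (m := 1) (by norm_num)).differentiable (by norm_num)
  have := (hF x).hasFDerivAt.clm_apply (hasFDerivAt_const (Pi.single p (1 : ℝ)) x)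
  rw [ContinuousLinearMap.comp_zero, zero_add] at this
  exact hasFDerivAt_pi'.1 this k

lemma pd_jac_apply (hy : ContDiff ℝ 2 y) (j k p : Fin 3) :
    pd j (fun z => jac y z k p) x =
      fderiv ℝ (fderiv ℝ y) x (Pi.single j 1) (Pi.single p 1) k := by
  simp [pd, (hasFDerivAt_jac_apply hy k p).fderiv]

lemma pd_jac_apply_comm (hy : ContDiff ℝ 2 y) (j k p : Fin 3) :
    pd j (fun z => jac y z k p) x = pd p (fun z => jac y z k j) x := by
  rw [pd_jac_apply hy, pd_jac_apply hy, hy.contDiffAt.isSymmSndFDerivAt (by simp)]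

end jac

lemma pd_cof_jac_apply {y : (Fin 3 → ℝ) → Fin 3 → ℝ} {x : Fin 3 → ℝ} (hy : ContDiff ℝ 2 y)
    (i j : Fin 3) :
    pd j (fun z => cof (jac y z) i j) x =
      pd j (fun z => jac y z (i + 1) (j + 1)) x * jac y x (i + 2) (j + 2)
        + jac y x (i + 1) (j + 1) * pd j (fun z => jac y z (i + 2) (j + 2)) x
        - (pd j (fun z => jac y z (i + 1) (j + 2)) x * jac y x (i + 2) (j + 1)
          + jac y x (i + 1) (j + 2) * pd j (fun z => jac y z (i + 2) (j + 1)) x) := by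
  have hd (k p : Fin 3) : DifferentiableAt ℝ (fun z => jac y z k p) x :=
    (hasFDerivAt_jac_apply hy k p).differentiableAt
  simp only [cof_apply]
  rw [pd_sub j ((hd _ _).fun_mul (hd _ _)) ((hd _ _).fun_mul (hd _ _)), pd_mul j (hd _ _) (hd _ _),
    pd_mul j (hd _ _) (hd _ _)]

/-- Piola identity: each row of the cofactor of the Jacobian of a C² map is divergence free. -/
theorem piola_identity (y : (Fin 3 → ℝ) → Fin 3 → ℝ) (hy : ContDiff ℝ 2 y)
    (x : Fin 3 → ℝ) (i : Fin 3) :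
    ∑ j : Fin 3, pd j (fun z => cof (jac y z) i j) x = 0 := by
  simp only [Fin.sum_univ_three, pd_cof_jac_apply hy, Fin.reduceAdd,
    pd_jac_apply_comm hy (j := 1) (p := 0), pd_jac_apply_comm hy (j := 2) (p := 0),
    pd_jac_apply_comm hy (j := 2) (p := 1)]
  ring
end

section
/- Weak form of the Piola identity: if y : ℝ³ → ℝ³ is twice continuously differentiable and v : ℝ³ → ℝ³ is continuously differentiable with compact support, then ∫_{ℝ³} cof(∇y(x)) : ∇v(x) dx = 0, where A : B := ∑_{i,j=1}^{3} A_{ij} B_{ij} denotes the Frobenius inner product of 3×3 matrices. -/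
open Matrix MeasureTheory

/-! Writing each cofactor as a 2×2 minor of `∇y`, every term of `∑ⱼ ∂ⱼ cof(∇y)ᵢⱼ` is a first
derivative of `y` times a second one, and these terms cancel in pairs by the symmetry of second
derivatives: the rows of `cof(∇y)` are divergence free (the Piola identity). Integrating by parts
against the compactly supported `v` then gives
`∫ cof(∇y) : ∇v = -∫ ∑ᵢ (∑ⱼ ∂ⱼ cof(∇y)ᵢⱼ) vᵢ = 0`. -/

lemma cof_of_apply (A : Fin 3 → Fin 3 → ℝ) (i j : Fin 3) :
    cof (of A) i j
      = A (i + 1) (j + 1) * A (i + 2) (j + 2) - A (i + 1) (j + 2) * A (i + 2) (j + 1) := by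
  fin_cases i <;> fin_cases j <;> simp [cof, adjugate_fin_three] <;> ring

/-- `D q p j` stands for `∂ⱼ (A q p)`; symmetry in `p, j` is the symmetry of second derivatives of a
map whose Jacobian is `A`. -/
lemma sum_fderiv_cofactor_eq_zero_of_symm (A : Fin 3 → Fin 3 → ℝ)
    (D : Fin 3 → Fin 3 → Fin 3 → ℝ) (hD : ∀ q p j, D q p j = D q j p) (a b : Fin 3) :
    ∑ j : Fin 3, (D a (j + 1) j * A b (j + 2) + A a (j + 1) * D b (j + 2) j
      - (D a (j + 2) j * A b (j + 1) + A a (j + 2) * D b (j + 1) j)) = 0 := by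
  simp only [Fin.sum_univ_three, Fin.reduceAdd, hD a 1 0, hD a 2 0, hD a 2 1, hD b 1 0, hD b 2 0,
    hD b 2 1]
  ring

section FDeriv

variable {E : Type*} [NormedAddCommGroup E] [NormedSpace ℝ E] {ι : Type*} [Fintype ι]
  {y : E → ι → ℝ}

lemma fderiv_apply_apply_eq_comp (v : E) (k : ι) :
    (fun x => fderiv ℝ y x v k) =
      (ContinuousLinearMap.proj k ∘L ContinuousLinearMap.apply ℝ (ι → ℝ) v) ∘ fderiv ℝ y :=
  rfl

lemma ContDiff.fderiv_apply_apply {n : WithTop ℕ∞} (hy : ContDiff ℝ (n + 1) y) (v : E) (k : ι) :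
    ContDiff ℝ n (fun x => fderiv ℝ y x v k) := by
  rw [fderiv_apply_apply_eq_comp]
  exact (ContinuousLinearMap.contDiff _).comp (hy.fderiv_right le_rfl)

lemma fderiv_fderiv_apply_apply {x : E} (hy : DifferentiableAt ℝ (fderiv ℝ y) x)
    (v w : E) (k : ι) :
    fderiv ℝ (fun x => fderiv ℝ y x v k) x w = fderiv ℝ (fderiv ℝ y) x w v k := by
  rw [fderiv_apply_apply_eq_comp,
    ((ContinuousLinearMap.hasFDerivAt _).comp x hy.hasFDerivAt).fderiv]
  rfl

end FDeriv

lemma Continuous.integrable_mul_of_hasCompactSupport {X : Type*} [TopologicalSpace X]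
    [MeasurableSpace X] [OpensMeasurableSpace X] {μ : Measure X} [IsFiniteMeasureOnCompacts μ]
    {f g : X → ℝ} (hf : Continuous f) (hg : Continuous g) (hg_supp : HasCompactSupport g) :
    Integrable (fun x => f x * g x) μ :=
  (hf.mul hg).integrable_of_hasCompactSupport hg_supp.mul_left

section IntegrationByParts

variable {E : Type*} [NormedAddCommGroup E] [NormedSpace ℝ E] [FiniteDimensional ℝ E]
  [MeasurableSpace E] [BorelSpace E] {μ : Measure E} [μ.IsAddHaarMeasure]

lemma integral_mul_fderiv_eq_neg_fderiv_mul_of_hasCompactSupport {f g : E → ℝ}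
    (hf : ContDiff ℝ 1 f) (hg : ContDiff ℝ 1 g) (hg_supp : HasCompactSupport g) (w : E) :
    ∫ x, f x * fderiv ℝ g x w ∂μ = -∫ x, fderiv ℝ f x w * g x ∂μ :=
  integral_mul_fderiv_eq_neg_fderiv_mul_of_integrable
    (((hf.continuous_fderiv one_ne_zero).clm_apply continuous_const)
      |>.integrable_mul_of_hasCompactSupport hg.continuous hg_supp)
    (hf.continuous.integrable_mul_of_hasCompactSupport
      ((hg.continuous_fderiv one_ne_zero).clm_apply continuous_const)
      (hg_supp.fderiv_apply (𝕜 := ℝ) w))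
    (hf.continuous.integrable_mul_of_hasCompactSupport hg.continuous hg_supp)
    (fun x _ => hf.differentiable one_ne_zero x) (fun x _ => hg.differentiable one_ne_zero x)

theorem integral_sum_sum_mul_fderiv_eq_neg {ι κ : Type*} [Fintype ι] [Fintype κ]
    {f : ι → κ → E → ℝ} {g : ι → E → ℝ} (hf : ∀ i j, ContDiff ℝ 1 (f i j))
    (hg : ∀ i, ContDiff ℝ 1 (g i)) (hg_supp : ∀ i, HasCompactSupport (g i)) (w : κ → E) :
    ∫ x, ∑ i, ∑ j, f i j x * fderiv ℝ (g i) x (w j) ∂μ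
      = -∫ x, ∑ i, (∑ j, fderiv ℝ (f i j) x (w j)) * g i x ∂μ := by
  have hfg' : ∀ i j, Integrable (fun x => f i j x * fderiv ℝ (g i) x (w j)) μ := fun i j =>
    (hf i j).continuous.integrable_mul_of_hasCompactSupport
      (((hg i).continuous_fderiv one_ne_zero).clm_apply continuous_const)
      ((hg_supp i).fderiv_apply (𝕜 := ℝ) (w j))
  have hf'g : ∀ i j, Integrable (fun x => fderiv ℝ (f i j) x (w j) * g i x) μ := fun i j =>
    (((hf i j).continuous_fderiv one_ne_zero).clm_apply continuous_const)
      |>.integrable_mul_of_hasCompactSupport (hg i).continuous (hg_supp i)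
  simp only [Finset.sum_mul]
  rw [integral_finsetSum _ fun i _ => integrable_finsetSum _ fun j _ => hfg' i j,
    integral_finsetSum _ fun i _ => integrable_finsetSum _ fun j _ => hf'g i j,
    ← Finset.sum_neg_distrib]
  refine Finset.sum_congr rfl fun i _ => ?_
  rw [integral_finsetSum _ fun j _ => hfg' i j, integral_finsetSum _ fun j _ => hf'g i j,
    ← Finset.sum_neg_distrib]
  exact Finset.sum_congr rfl fun j _ =>
    integral_mul_fderiv_eq_neg_fderiv_mul_of_hasCompactSupport (hf i j) (hg i) (hg_supp i) (w j)

end IntegrationByParts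

section Piola

variable {y : (Fin 3 → ℝ) → Fin 3 → ℝ}

lemma ContDiff.cof_jac_apply {n : WithTop ℕ∞} (hy : ContDiff ℝ (n + 1) y) (i j : Fin 3) :
    ContDiff ℝ n (fun x => cof (jac y x) i j) := by
  have hJ := fun k p => hy.fderiv_apply_apply (Pi.single p 1) k
  simp only [jac, cof_of_apply]
  exact ((hJ _ _).mul (hJ _ _)).sub ((hJ _ _).mul (hJ _ _))

theorem sum_fderiv_cof_jac_eq_zero (hy : ContDiff ℝ 2 y) (i : Fin 3) (x : Fin 3 → ℝ) :
    ∑ j, fderiv ℝ (fun x => cof (jac y x) i j) x (Pi.single j 1) = 0 := by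
  have hJ : ∀ k p, DifferentiableAt ℝ (fun x => fderiv ℝ y x (Pi.single p 1) k) x := fun k p =>
    (hy.fderiv_apply_apply (n := 1) _ k).differentiable one_ne_zero x
  have hfderiv : DifferentiableAt ℝ (fderiv ℝ y) x :=
    (hy.fderiv_right (m := 1) le_rfl).differentiable one_ne_zero x
  simp only [jac, cof_of_apply, fderiv_fun_sub, fderiv_fun_mul, hJ, DifferentiableAt.fun_mul,
    _root_.sub_apply, _root_.add_apply, _root_.smul_apply, smul_eq_mul,
    fderiv_fderiv_apply_apply hfderiv]
  convert sum_fderiv_cofactor_eq_zero_of_symm (fun k p => fderiv ℝ y x (Pi.single p 1) k)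
    (fun q p j => fderiv ℝ (fderiv ℝ y) x (Pi.single j 1) (Pi.single p 1) q)
    (fun q p j => congrFun ((hy.contDiffAt.isSymmSndFDerivAt (by simp)) _ _) q) (i + 1) (i + 2)
    using 2
  ring

end Piola

/-- Weak form of the Piola identity: for `y` of class C² and `v` of class C¹ with
compact support, `∫ cof(∇y) : ∇v dx = 0`, where `:` is the Frobenius inner product. -/
theorem weak_piola (y v : (Fin 3 → ℝ) → Fin 3 → ℝ)
    (hy : ContDiff ℝ 2 y) (hv : ContDiff ℝ 1 v) (hvsupp : HasCompactSupport v) :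
    ∫ x : Fin 3 → ℝ, ∑ i : Fin 3, ∑ j : Fin 3, cof (jac y x) i j * jac v x i j = 0 := by
  have hjac_v : ∀ x i j, jac v x i j = fderiv ℝ (fun x => v x i) x (Pi.single j 1) := by
    intro x i j
    rw [fderiv_apply (hv.differentiable one_ne_zero x)]
    rfl
  simp only [hjac_v]
  rw [integral_sum_sum_mul_fderiv_eq_neg (fun i j => hy.cof_jac_apply (n := 1) i j)
    (fun i => contDiff_pi.1 hv i) (fun i => hvsupp.comp_left (g := fun u : Fin 3 → ℝ => u i) rfl)]
  simp [sum_fderiv_cof_jac_eq_zero hy]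
end

section
/- Polyconvexity of the regularizing term: for every real p ≥ 1, the function h : ℝ^{3×3} × (0,∞) → ℝ defined by h(H, d) = ‖H‖^p / d^{p−1}, where ‖·‖ is the Frobenius norm, is convex on the convex set ℝ^{3×3} × (0,∞). (Consequently F ↦ ‖cof F‖^p / (det F)^{p−1} is a polyconvex function of the deformation gradient.) -/
open Matrix

/-- The Frobenius norm of a 3×3 real matrix. -/
noncomputable def frobNorm (A : Matrix (Fin 3) (Fin 3) ℝ) : ℝ :=
  Real.sqrt (∑ i : Fin 3, ∑ j : Fin 3, (A i j) ^ 2)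

/-!
The map `(x, d) ↦ ‖x‖ ^ p / d ^ (p - 1)` is the perspective `(x, d) ↦ d * φ (d⁻¹ • x)` of the
convex function `φ = ‖·‖ ^ p`, and perspectives of convex functions are convex: with
`D = a d₁ + b d₂`, the point `D⁻¹ • (a x₁ + b x₂)` is the convex combination of `d₁⁻¹ • x₁` and
`d₂⁻¹ • x₂` with weights `a d₁ / D` and `b d₂ / D`.
-/

section Perspective

variable {E : Type*} [AddCommGroup E] [Module ℝ E] {s : Set E} {f : E → ℝ}

theorem inv_smul_add_smul_eq_perspective_combination (x₁ x₂ : E) {d₁ d₂ : ℝ} (a b : ℝ)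
    (hd₁ : d₁ ≠ 0) (hd₂ : d₂ ≠ 0) :
    (a * d₁ + b * d₂)⁻¹ • (a • x₁ + b • x₂) =
      (a * d₁ / (a * d₁ + b * d₂)) • (d₁⁻¹ • x₁) + (b * d₂ / (a * d₁ + b * d₂)) • (d₂⁻¹ • x₂) := by
  simp only [smul_add, smul_smul]
  congr 2 <;> field_simp

theorem ConvexOn.perspective (hf : ConvexOn ℝ s f) :
    ConvexOn ℝ {q : E × ℝ | 0 < q.2 ∧ q.2⁻¹ • q.1 ∈ s} (fun q => q.2 * f (q.2⁻¹ • q.1)) := by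
  refine ⟨?_, ?_⟩
  · rintro ⟨x₁, d₁⟩ ⟨hd₁, hx₁⟩ ⟨x₂, d₂⟩ ⟨hd₂, hx₂⟩ a b ha hb hab
    have hD : 0 < a * d₁ + b * d₂ := convex_Ioi (0 : ℝ) hd₁ hd₂ ha hb hab
    have hw : a * d₁ / (a * d₁ + b * d₂) + b * d₂ / (a * d₁ + b * d₂) = 1 := by field_simp
    simp only [Set.mem_ofPred_eq, Prod.smul_mk, Prod.mk_add_mk, smul_eq_mul,
      inv_smul_add_smul_eq_perspective_combination x₁ x₂ a b hd₁.ne' hd₂.ne']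
    exact ⟨hD, hf.1 hx₁ hx₂ (by positivity) (by positivity) hw⟩
  · rintro ⟨x₁, d₁⟩ ⟨hd₁, hx₁⟩ ⟨x₂, d₂⟩ ⟨hd₂, hx₂⟩ a b ha hb hab
    have hD : 0 < a * d₁ + b * d₂ := convex_Ioi (0 : ℝ) hd₁ hd₂ ha hb hab
    have hw : a * d₁ / (a * d₁ + b * d₂) + b * d₂ / (a * d₁ + b * d₂) = 1 := by field_simp
    simp only [Prod.smul_mk, Prod.mk_add_mk, smul_eq_mul,
      inv_smul_add_smul_eq_perspective_combination x₁ x₂ a b hd₁.ne' hd₂.ne']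
    calc (a * d₁ + b * d₂) * f _
        ≤ (a * d₁ + b * d₂) * (a * d₁ / (a * d₁ + b * d₂) * f (d₁⁻¹ • x₁) +
            b * d₂ / (a * d₁ + b * d₂) * f (d₂⁻¹ • x₂)) :=
          mul_le_mul_of_nonneg_left (hf.2 hx₁ hx₂ (by positivity) (by positivity) hw) hD.le
      _ = a * (d₁ * f (d₁⁻¹ • x₁)) + b * (d₂ * f (d₂⁻¹ • x₂)) := by field_simp

end Perspective

theorem convexOn_norm_rpow {E : Type*} [SeminormedAddCommGroup E] [NormedSpace ℝ E] {p : ℝ}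
    (hp : 1 ≤ p) : ConvexOn ℝ Set.univ (fun x : E => ‖x‖ ^ p) := by
  refine ⟨convex_univ, fun x _ y _ a b ha hb hab => ?_⟩
  calc ‖a • x + b • y‖ ^ p ≤ (a * ‖x‖ + b * ‖y‖) ^ p := by
        gcongr
        calc ‖a • x + b • y‖ ≤ ‖a • x‖ + ‖b • y‖ := norm_add_le _ _
          _ = a * ‖x‖ + b * ‖y‖ := by rw [norm_smul_of_nonneg ha, norm_smul_of_nonneg hb]
    _ ≤ a • ‖x‖ ^ p + b • ‖y‖ ^ p :=
        (convexOn_rpow hp).2 (norm_nonneg x) (norm_nonneg y) ha hb hab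

theorem convexOn_norm_rpow_div_rpow {E : Type*} [SeminormedAddCommGroup E] [NormedSpace ℝ E]
    {p : ℝ} (hp : 1 ≤ p) :
    ConvexOn ℝ {q : E × ℝ | 0 < q.2} (fun q => ‖q.1‖ ^ p / q.2 ^ (p - 1)) := by
  have h := (convexOn_norm_rpow (E := E) hp).perspective
  simp only [Set.mem_univ, and_true] at h
  refine h.congr fun q (hq : 0 < q.2) => ?_
  dsimp only
  rw [norm_smul_of_nonneg (inv_nonneg.2 hq.le), Real.mul_rpow (inv_nonneg.2 hq.le) (norm_nonneg _),
    Real.inv_rpow hq.le, Real.rpow_sub hq, Real.rpow_one]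
  field_simp

attribute [local instance] Matrix.frobeniusSeminormedAddCommGroup Matrix.frobeniusNormedSpace

theorem frobNorm_eq_norm (A : Matrix (Fin 3) (Fin 3) ℝ) : frobNorm A = ‖A‖ := by
  simp [frobNorm, frobenius_norm_def, Real.sqrt_eq_rpow]

/-- Polyconvexity of the regularizing term: for every real `p ≥ 1`, the function
`(H, d) ↦ ‖H‖^p / d^(p-1)` (Frobenius norm) is convex on `ℝ^{3×3} × (0,∞)`. -/
theorem convexOn_regularizer (p : ℝ) (hp : 1 ≤ p) :
    ConvexOn ℝ {q : Matrix (Fin 3) (Fin 3) ℝ × ℝ | 0 < q.2}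
      (fun q => frobNorm q.1 ^ p / q.2 ^ (p - 1)) := by
  simpa only [frobNorm_eq_norm] using convexOn_norm_rpow_div_rpow hp
end

section
/- Two-sided energy inequality for incremental minimization: let Q be a nonempty set, let D : Q × Q → ℝ satisfy D ≥ 0, D(q,q) = 0 for all q, and D(q,q') = D(q',q) for all q, q', and let E : ℝ × Q → ℝ be such that for each q ∈ Q the map θ ↦ E(θ, q) is continuously differentiable. Fix real numbers s < t and elements q₀, q₁ ∈ Q, and assume: (i) stability of q₀ at time s, i.e. E(s, q₀) ≤ E(s, q) + D(q₀, q) for all q ∈ Q; (ii) incremental minimality of q₁ at time t, i.e. E(t, q₁) + D(q₀, q₁) ≤ E(t, q) + D(q₀, q) for all q ∈ Q. Then ∫_s^t ∂_θ E(θ, q₁) dθ ≤ E(t, q₁) + D(q₀, q₁) − E(s, q₀) ≤ ∫_s^t ∂_θ E(θ, q₀) dθ. -/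
/-!
By the fundamental theorem of calculus, `∫_s^t ∂_θ E(θ, q) dθ = E(t, q) - E(s, q)` for every `q`.
The lower bound is then stability of `q₀` tested against `q₁`, and the upper bound is
incremental minimality of `q₁` tested against `q₀`, where `D(q₀, q₀) = 0`.
-/

open MeasureTheory intervalIntegral

theorem ContDiff.integral_deriv_eq_sub {E : Type*} [NormedAddCommGroup E] [NormedSpace ℝ E]
    [CompleteSpace E] {f : ℝ → E} (hf : ContDiff ℝ 1 f) (a b : ℝ) :
    ∫ x in a..b, deriv f x = f b - f a :=
  intervalIntegral.integral_deriv_eq_sub (fun x _ => hf.differentiable one_ne_zero x)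
    ((hf.continuous_deriv le_rfl).intervalIntegrable a b)

theorem two_sided_energy_inequality_general {Q : Type*}
    (D : Q → Q → ℝ)
    (hDdiag : ∀ q : Q, D q q = 0)
    (E : ℝ → Q → ℝ)
    (hE : ∀ q : Q, ContDiff ℝ 1 fun θ => E θ q)
    (s t : ℝ) (q₀ q₁ : Q)
    (hstable : ∀ q : Q, E s q₀ ≤ E s q + D q₀ q)
    (hmin : ∀ q : Q, E t q₁ + D q₀ q₁ ≤ E t q + D q₀ q) :
    (∫ θ in s..t, deriv (fun θ => E θ q₁) θ) ≤ E t q₁ + D q₀ q₁ - E s q₀ ∧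
      E t q₁ + D q₀ q₁ - E s q₀ ≤ ∫ θ in s..t, deriv (fun θ => E θ q₀) θ := by
  rw [(hE q₁).integral_deriv_eq_sub, (hE q₀).integral_deriv_eq_sub]
  have h₀ := hstable q₁
  have h₁ := hmin q₀
  rw [hDdiag q₀] at h₁
  constructor <;> linarith

/-- Two-sided energy inequality for incremental minimization: if `q₀` is stable at
time `s` and `q₁` minimizes `E(t,·) + D(q₀,·)`, then
`∫_s^t ∂_θ E(θ,q₁) dθ ≤ E(t,q₁) + D(q₀,q₁) − E(s,q₀) ≤ ∫_s^t ∂_θ E(θ,q₀) dθ`. -/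
theorem two_sided_energy_inequality {Q : Type*} [Nonempty Q]
    (D : Q → Q → ℝ)
    (hDnonneg : ∀ q q' : Q, 0 ≤ D q q')
    (hDdiag : ∀ q : Q, D q q = 0)
    (hDsymm : ∀ q q' : Q, D q q' = D q' q)
    (E : ℝ → Q → ℝ)
    (hE : ∀ q : Q, ContDiff ℝ 1 fun θ => E θ q)
    (s t : ℝ) (hst : s < t) (q₀ q₁ : Q)
    (hstable : ∀ q : Q, E s q₀ ≤ E s q + D q₀ q)
    (hmin : ∀ q : Q, E t q₁ + D q₀ q₁ ≤ E t q + D q₀ q) :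
    (∫ θ in s..t, deriv (fun θ => E θ q₁) θ) ≤ E t q₁ + D q₀ q₁ - E s q₀ ∧
      E t q₁ + D q₀ q₁ - E s q₀ ≤ ∫ θ in s..t, deriv (fun θ => E θ q₀) θ :=
  two_sided_energy_inequality_general D hDdiag E hE s t q₀ q₁ hstable hmin
end

section
/- Weak lower semicontinuity of convex integral functionals: let Ω ⊂ ℝⁿ be a measurable set of finite Lebesgue measure, let h : ℝ^m → ℝ be convex and nonnegative, and let u_j, u : Ω → ℝ^m be integrable functions such that u_j converges weakly to u in L¹, i.e. ∫_Ω u_j(x)·g(x) dx → ∫_Ω u(x)·g(x) dx for every bounded measurable g : Ω → ℝ^m. Then liminf_{j→∞} ∫_Ω h(u_j(x)) dx ≥ ∫_Ω h(u(x)) dx (the integrals of h(u_j) and h(u) taken with values in [0, ∞]). -/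
/-!
A nonnegative convex `h` on `ℝ^m` is the supremum of countably many affine minorants
`ℓ_k a = b_k + c_k ⬝ᵥ a` with `ℓ_0 = 0`: take supporting hyperplanes at a dense sequence of
points. Fix `K` and let `H_K = max_{k ≤ K} ℓ_k`. Choosing measurably an index `κ x ≤ K` at which
the maximum `H_K (u₀ x)` is attained, the bounded measurable fields `β = b ∘ κ`, `g = c ∘ κ`
satisfy `β x + a ⬝ᵥ g x ≤ h a` for all `a` and `β x + u₀ x ⬝ᵥ g x = H_K (u₀ x)`. Weak
convergence tested against `g` then gives
`∫ H_K ∘ u₀ = lim_j ∫ (β + u_j ⬝ᵥ g) ≤ liminf_j ∫ h ∘ u_j`,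
and monotone convergence in `K` yields the claim.
-/

open MeasureTheory Filter Topology Set

theorem ConvexOn.exists_subgradient {E : Type*} [AddCommGroup E] [TopologicalSpace E]
    [IsTopologicalAddGroup E] [Module ℝ E] [ContinuousSMul ℝ E]
    {h : E → ℝ} (hconv : ConvexOn ℝ univ h) (hcont : Continuous h) (q : E) :
    ∃ φ : StrongDual ℝ E, ∀ y, h q + φ (y - q) ≤ h y := by
  obtain ⟨f, hf⟩ := geometric_hahn_banach_open_point (s := {z : E × ℝ | h z.1 < z.2})
    (x := (q, h q)) (by simpa [Set.ofPred_and] using hconv.convex_strict_epigraph)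
    (isOpen_lt (hcont.comp continuous_fst) continuous_snd) (lt_irrefl (h q))
  -- The separating functional has negative vertical component `c` (test it at `(q, h q + 1)`),
  -- so its restriction to `E × {0}`, rescaled by `(-c)⁻¹`, is a subgradient.
  set c := f (0, 1)
  have hsplit : ∀ y t, f (y, t) = f (y, 0) + t * c := fun y t => by
    rw [show ((y, t) : E × ℝ) = (y, 0) + t • (0, 1) by simp, map_add, map_smul, smul_eq_mul]
  have hc : 0 < -c := by
    have := hf (q, h q + 1) (lt_add_one (h q))
    rw [hsplit, hsplit q (h q)] at this
    linarith
  have hsupp : ∀ y, f (y, 0) + h y * c ≤ f (q, 0) + h q * c := fun y => by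
    refine le_of_forall_pos_lt_add fun ε hε => ?_
    have := hf (y, h y + ε / -c) (lt_add_of_pos_right _ (div_pos hε hc))
    rw [hsplit, hsplit q (h q), add_mul,
      show ε / -c * c = -ε by field_simp [(neg_pos.1 hc).ne]] at this
    linarith
  refine ⟨(-c)⁻¹ • f.comp (ContinuousLinearMap.inl ℝ E ℝ), fun y => ?_⟩
  have key : (-c)⁻¹ * (f (y, 0) - f (q, 0)) ≤ h y - h q := by
    rw [inv_mul_le_iff₀ hc]
    linarith [hsupp y]
  simpa [← map_sub] using key

theorem ContinuousLinearMap.apply_eq_dotProduct {ι R : Type*} [Fintype ι] [DecidableEq ι]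
    [CommSemiring R] [TopologicalSpace R] (φ : (ι → R) →L[R] R) (y : ι → R) :
    φ y = (fun i => φ (Pi.single i 1)) ⬝ᵥ y := by
  conv_lhs => rw [pi_eq_sum_univ' y]
  simp [dotProduct, map_sum, mul_comm]

theorem ConvexOn.exists_seq_affine_minorant {m : ℕ} {h : (Fin m → ℝ) → ℝ}
    (hconv : ConvexOn ℝ univ h) (hnonneg : 0 ≤ h) :
    ∃ (b : ℕ → ℝ) (c : ℕ → Fin m → ℝ), b 0 = 0 ∧ c 0 = 0 ∧
      (∀ k a, b k + c k ⬝ᵥ a ≤ h a) ∧ ∀ a, ∀ t < h a, ∃ k, t < b k + c k ⬝ᵥ a := by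
  have hcont : Continuous h := continuousOn_univ.1 (hconv.continuousOn isOpen_univ)
  obtain ⟨e, he⟩ := TopologicalSpace.exists_dense_seq (Fin m → ℝ)
  choose φ hφ using fun k => hconv.exists_subgradient hcont (e k)
  set p : ℕ → Fin m → ℝ := fun k i => φ k (Pi.single i 1)
  have hφp : ∀ k a, h (e k) + φ k (a - e k) = (h (e k) - p k ⬝ᵥ e k) + p k ⬝ᵥ a := fun k a => by
    rw [(φ k).apply_eq_dotProduct, dotProduct_sub]
    ring
  refine ⟨fun | 0 => 0 | k + 1 => h (e k) - p k ⬝ᵥ e k, fun | 0 => 0 | k + 1 => p k,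
    rfl, rfl, ?_, ?_⟩
  · rintro (_ | k) a
    · simpa using hnonneg a
    · exact (hφp k a).symm.trans_le (hφ k a)
  · intro a t ht
    -- Evaluating the subgradient inequality at `2 • e k - a` bounds the minorant at `e k` from
    -- below by `2 * h (e k) - h (2 • e k - a)`, which tends to `h a` as `e k → a`.
    obtain ⟨k, hk⟩ := he.exists_mem_open (s := {q | t < 2 * h q - h (2 • q - a)})
      (isOpen_lt continuous_const (by fun_prop)) ⟨a, by simpa [two_smul, two_mul] using ht⟩
    refine ⟨k + 1, hk.trans_le ?_⟩
    have := hφ k (2 • e k - a)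
    rw [show 2 • e k - a - e k = -(a - e k) by module, map_neg] at this
    change _ ≤ h (e k) - p k ⬝ᵥ e k + p k ⬝ᵥ a
    rw [← hφp]
    linarith

theorem tendsto_partialSups_of_forall_lt {β : Type*} [LinearOrder β] [TopologicalSpace β]
    [OrderTopology β] {f : ℕ → β} {L : β} (hle : ∀ k, f k ≤ L) (hlt : ∀ t < L, ∃ k, t < f k) :
    Tendsto (partialSups f) atTop (𝓝 L) := by
  refine tendsto_order.2 ⟨fun t ht => ?_, fun t ht => Eventually.of_forall fun K =>
    (partialSups_le f K L fun k _ => hle k).trans_lt ht⟩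
  obtain ⟨k, hk⟩ := hlt t ht
  exact eventually_atTop.2 ⟨k, fun K hK => hk.trans_le (le_partialSups_of_le f hK)⟩

theorem norm_le_sum_range_norm {E : Type*} [SeminormedAddGroup E] (F : ℕ → E) {k K : ℕ}
    (hk : k ≤ K) : ‖F k‖ ≤ ∑ i ∈ Finset.range (K + 1), ‖F i‖ :=
  Finset.single_le_sum (fun i _ => norm_nonneg (F i)) (Finset.mem_range.2 (Nat.lt_add_one_of_le hk))

namespace MeasureTheory

variable {α : Type*} [MeasurableSpace α] {μ : Measure α}

theorem measurable_partialSups {M : Type*} [MeasurableSpace M] [SemilatticeSup M]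
    [MeasurableSup₂ M] {f : ℕ → α → M} (hf : ∀ k, Measurable (f k)) (K : ℕ) :
    Measurable (partialSups f K) := by
  rw [partialSups_eq_sup'_range]
  exact Finset.measurable_range_sup' fun k _ => hf k

theorem exists_measurable_argmax_partialSups {f : ℕ → α → ℝ} (hf : ∀ k, Measurable (f k))
    (K : ℕ) : ∃ κ : α → ℕ, Measurable κ ∧ (∀ x, κ x ≤ K) ∧ ∀ x, f (κ x) x = partialSups f K x := by
  classical
  have hex : ∀ x, ∃ k, k ≤ K ∧ f k x = partialSups f K x := fun x => by
    simpa only [Pi.partialSups_apply, eq_comm] using exists_partialSups_eq (f · x) K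
  exact ⟨fun x => Nat.find (hex x), measurable_find hex fun k => (MeasurableSet.const _).inter
    (measurableSet_eq_fun (hf k) (measurable_partialSups hf K)),
    fun x => (Nat.find_spec (hex x)).1, fun x => (Nat.find_spec (hex x)).2⟩

theorem ofReal_integral_le_lintegral_ofReal {f : α → ℝ} (hf : Integrable f μ) :
    ENNReal.ofReal (∫ x, f x ∂μ) ≤ ∫⁻ x, ENNReal.ofReal (f x) ∂μ := by
  refine ENNReal.ofReal_le_of_le_toReal ?_
  rw [integral_eq_lintegral_pos_part_sub_lintegral_neg_part hf]
  exact sub_le_self _ ENNReal.toReal_nonneg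

variable {m : ℕ}

theorem Integrable.dotProduct_of_bound {u g : α → Fin m → ℝ} (hu : Integrable u μ)
    (hg : AEStronglyMeasurable g μ) {C : ℝ} (hC : ∀ x, ‖g x‖ ≤ C) :
    Integrable (fun x => u x ⬝ᵥ g x) μ :=
  integrable_finsetSum _ fun i _ => (hu.eval i).mul_bdd
    ((continuous_apply i).comp_aestronglyMeasurable hg)
    (ae_of_all _ fun x => (norm_le_pi_norm (g x) i).trans (hC x))

variable {h : (Fin m → ℝ) → ℝ} {u : ℕ → α → Fin m → ℝ} {u₀ : α → Fin m → ℝ}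

theorem ofReal_integral_le_liminf_of_affine_minorant (huint : ∀ j, Integrable (u j) μ)
    (hu₀int : Integrable u₀ μ) {β : α → ℝ} {g : α → Fin m → ℝ} (hβ : Integrable β μ)
    (hg : AEStronglyMeasurable g μ) {C : ℝ} (hC : ∀ x, ‖g x‖ ≤ C)
    (hle : ∀ x a, β x + a ⬝ᵥ g x ≤ h a)
    (hweak : Tendsto (fun j => ∫ x, u j x ⬝ᵥ g x ∂μ) atTop (𝓝 (∫ x, u₀ x ⬝ᵥ g x ∂μ))) :
    ENNReal.ofReal (∫ x, β x + u₀ x ⬝ᵥ g x ∂μ) ≤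
      atTop.liminf fun j => ∫⁻ x, ENNReal.ofReal (h (u j x)) ∂μ := by
  have hlim : Tendsto (fun j => ∫ x, β x + u j x ⬝ᵥ g x ∂μ) atTop
      (𝓝 (∫ x, β x + u₀ x ⬝ᵥ g x ∂μ)) := by
    simp only [integral_add hβ ((huint _).dotProduct_of_bound hg hC),
      integral_add hβ (hu₀int.dotProduct_of_bound hg hC)]
    exact hweak.const_add _
  rw [← ((ENNReal.continuous_ofReal.tendsto _).comp hlim).liminf_eq]
  refine liminf_le_liminf (Eventually.of_forall fun j => ?_)
  calc ENNReal.ofReal (∫ x, β x + u j x ⬝ᵥ g x ∂μ)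
      ≤ ∫⁻ x, ENNReal.ofReal (β x + u j x ⬝ᵥ g x) ∂μ :=
        ofReal_integral_le_lintegral_ofReal (hβ.add ((huint j).dotProduct_of_bound hg hC))
    _ ≤ ∫⁻ x, ENNReal.ofReal (h (u j x)) ∂μ :=
        lintegral_mono fun x => ENNReal.ofReal_le_ofReal (hle x _)

variable [IsFiniteMeasure μ]

theorem lintegral_ofReal_partialSups_le_liminf (huint : ∀ j, Integrable (u j) μ)
    (hu₀int : Integrable u₀ μ) {v : α → Fin m → ℝ} (hv : Measurable v) (hv₀ : u₀ =ᵐ[μ] v)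
    (hweak : ∀ g : α → Fin m → ℝ, Measurable g → (∃ C : ℝ, ∀ x, ‖g x‖ ≤ C) →
      Tendsto (fun j => ∫ x, u j x ⬝ᵥ g x ∂μ) atTop (𝓝 (∫ x, u₀ x ⬝ᵥ g x ∂μ)))
    {b : ℕ → ℝ} {c : ℕ → Fin m → ℝ} (hb0 : b 0 = 0) (hc0 : c 0 = 0)
    (hle : ∀ k a, b k + c k ⬝ᵥ a ≤ h a) (K : ℕ) :
    ∫⁻ x, ENNReal.ofReal (partialSups (fun k x => b k + c k ⬝ᵥ v x) K x) ∂μ ≤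
      atTop.liminf fun j => ∫⁻ x, ENNReal.ofReal (h (u j x)) ∂μ := by
  set ℓ : ℕ → α → ℝ := fun k x => b k + c k ⬝ᵥ v x
  obtain ⟨κ, hκ, hκK, hκmax⟩ :=
    exists_measurable_argmax_partialSups (f := ℓ) (fun k => by fun_prop) K
  have hβ : Integrable (fun x => b (κ x)) μ := Integrable.of_bound
    (measurable_from_nat.comp hκ).aestronglyMeasurable _
    (ae_of_all _ fun x => norm_le_sum_range_norm b (hκK x))
  have hg : Measurable fun x => c (κ x) := measurable_from_nat.comp hκ
  have hgC : ∀ x, ‖c (κ x)‖ ≤ ∑ k ∈ Finset.range (K + 1), ‖c k‖ := fun x =>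
    norm_le_sum_range_norm c (hκK x)
  have hF : (fun x => b (κ x) + u₀ x ⬝ᵥ c (κ x)) =ᵐ[μ] partialSups ℓ K := by
    filter_upwards [hv₀] with x hx
    rw [hx, dotProduct_comm]
    exact hκmax x
  have hF_nonneg : ∀ x, 0 ≤ partialSups ℓ K x := fun x => by
    simpa [ℓ, hb0, hc0] using le_partialSups_of_le ℓ K.zero_le x
  rw [← ofReal_integral_eq_lintegral_ofReal
    ((hβ.add (hu₀int.dotProduct_of_bound hg.aestronglyMeasurable hgC)).congr hF)
    (ae_of_all _ hF_nonneg), ← integral_congr_ae hF]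
  exact ofReal_integral_le_liminf_of_affine_minorant huint hu₀int hβ hg.aestronglyMeasurable
    hgC (fun x a => dotProduct_comm a _ ▸ hle _ a) (hweak _ hg ⟨_, hgC⟩)

theorem lintegral_ofReal_le_liminf_of_weak_tendsto (hconv : ConvexOn ℝ univ h)
    (hnonneg : 0 ≤ h) (huint : ∀ j, Integrable (u j) μ) (hu₀int : Integrable u₀ μ)
    (hweak : ∀ g : α → Fin m → ℝ, Measurable g → (∃ C : ℝ, ∀ x, ‖g x‖ ≤ C) →
      Tendsto (fun j => ∫ x, u j x ⬝ᵥ g x ∂μ) atTop (𝓝 (∫ x, u₀ x ⬝ᵥ g x ∂μ))) :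
    ∫⁻ x, ENNReal.ofReal (h (u₀ x)) ∂μ ≤
      atTop.liminf fun j => ∫⁻ x, ENNReal.ofReal (h (u j x)) ∂μ := by
  obtain ⟨b, c, hb0, hc0, hle, hlt⟩ := hconv.exists_seq_affine_minorant hnonneg
  obtain ⟨v, hv, hv₀⟩ := hu₀int.aemeasurable
  set ℓ : ℕ → α → ℝ := fun k x => b k + c k ⬝ᵥ v x
  have htendsto : Tendsto (fun K => ∫⁻ x, ENNReal.ofReal (partialSups ℓ K x) ∂μ) atTop
      (𝓝 (∫⁻ x, ENNReal.ofReal (h (u₀ x)) ∂μ)) := by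
    rw [lintegral_congr_ae (hv₀.mono fun x hx => by rw [hx])]
    refine lintegral_tendsto_of_tendsto_of_monotone
      (fun K => (measurable_partialSups (fun k => by fun_prop) K).ennreal_ofReal.aemeasurable)
      (ae_of_all _ fun x K L hKL => ENNReal.ofReal_le_ofReal ((partialSups ℓ).monotone hKL x))
      (ae_of_all _ fun x => ?_)
    simp only [Pi.partialSups_apply]
    exact (ENNReal.continuous_ofReal.tendsto _).comp
      (tendsto_partialSups_of_forall_lt (hle · (v x)) (hlt (v x)))
  exact le_of_tendsto' htendsto
    (lintegral_ofReal_partialSups_le_liminf huint hu₀int hv hv₀ hweak hb0 hc0 hle)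

end MeasureTheory

theorem weak_lsc_convex_integral_general (n m : ℕ)
    (Ω : Set (Fin n → ℝ)) (hΩfin : volume Ω < ⊤)
    (h : (Fin m → ℝ) → ℝ) (hconv : ConvexOn ℝ Set.univ h) (hnonneg : ∀ a, 0 ≤ h a)
    (u : ℕ → (Fin n → ℝ) → Fin m → ℝ) (u₀ : (Fin n → ℝ) → Fin m → ℝ)
    (huint : ∀ j, IntegrableOn (u j) Ω) (hu₀int : IntegrableOn u₀ Ω)
    (hweak : ∀ g : (Fin n → ℝ) → Fin m → ℝ, Measurable g → (∃ C : ℝ, ∀ x, ‖g x‖ ≤ C) →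
      Tendsto (fun j => ∫ x in Ω, ∑ i : Fin m, u j x i * g x i) atTop
        (𝓝 (∫ x in Ω, ∑ i : Fin m, u₀ x i * g x i))) :
    (∫⁻ x in Ω, ENNReal.ofReal (h (u₀ x))) ≤
      atTop.liminf fun j => ∫⁻ x in Ω, ENNReal.ofReal (h (u j x)) := by
  have : IsFiniteMeasure (volume.restrict Ω) := isFiniteMeasure_restrict.2 hΩfin.ne
  exact lintegral_ofReal_le_liminf_of_weak_tendsto hconv hnonneg huint hu₀int hweak

/-- Weak lower semicontinuity of convex integral functionals: if `h : ℝ^m → ℝ` is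
convex and nonnegative and `u_j ⇀ u` weakly in `L¹(Ω; ℝ^m)` (tested against all
bounded measurable `g`), then `liminf_j ∫_Ω h(u_j) ≥ ∫_Ω h(u)`, the integrals of
`h(u_j)`, `h(u)` taken with values in `[0,∞]`. -/
theorem weak_lsc_convex_integral (n m : ℕ)
    (Ω : Set (Fin n → ℝ)) (hΩmeas : MeasurableSet Ω) (hΩfin : volume Ω < ⊤)
    (h : (Fin m → ℝ) → ℝ) (hconv : ConvexOn ℝ Set.univ h) (hnonneg : ∀ a, 0 ≤ h a)
    (u : ℕ → (Fin n → ℝ) → Fin m → ℝ) (u₀ : (Fin n → ℝ) → Fin m → ℝ)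
    (huint : ∀ j, IntegrableOn (u j) Ω) (hu₀int : IntegrableOn u₀ Ω)
    (hweak : ∀ g : (Fin n → ℝ) → Fin m → ℝ, Measurable g → (∃ C : ℝ, ∀ x, ‖g x‖ ≤ C) →
      Tendsto (fun j => ∫ x in Ω, ∑ i : Fin m, u j x i * g x i) atTop
        (𝓝 (∫ x in Ω, ∑ i : Fin m, u₀ x i * g x i))) :
    (∫⁻ x in Ω, ENNReal.ofReal (h (u₀ x))) ≤
      atTop.liminf fun j => ∫⁻ x in Ω, ENNReal.ofReal (h (u j x)) :=
  weak_lsc_convex_integral_general n m Ω hΩfin h hconv hnonneg u u₀ huint hu₀int hweak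
end
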